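/- Let ρ be a density matrix and let δ(ρ) ∈ ℝ^d denote the vector with entries √(ρ_{ii}). Then for every integer m ≥ 1, max_{ω ∈ N_m} F(ρ, ω) ≤ (1/m) ‖δ(ρ)‖_{[m]}², where N_m = { ω density matrix : ω_{ii} ≤ 1/m ∀i } and F is the fidelity. -/

import Mathlib

open Matrix BigOperators Complex ComplexOrder

noncomputable section

variable {ι : Type*} [Fintype ι] [DecidableEq ι]

/-- A density matrix: positive semidefinite with unit trace. -/
def IsDensityMatrix (ρ : Matrix ι ι ℂ) : Prop := ρ.PosSemidef ∧ ρ.trace = 1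

/-- The rank-one projector |ψ⟩⟨ψ| associated to a vector. -/
def pureState (ψ : ι → ℂ) : Matrix ι ι ℂ := Matrix.of fun i j => ψ i * (starRingEnd ℂ) (ψ j)

/-- The square root of a positive semidefinite matrix, as `Matrix.PosSemidef.sqrt` was defined
in the older Mathlib. -/
def psdSqrt {A : Matrix ι ι ℂ} (hA : A.PosSemidef) : Matrix ι ι ℂ :=
  (hA.1.eigenvectorUnitary : Matrix ι ι ℂ) * diagonal ((↑) ∘ Real.sqrt ∘ hA.1.eigenvalues) *
    (star (hA.1.eigenvectorUnitary : Matrix ι ι ℂ))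

/-- The trace norm ‖A‖₁ = Tr √(AᴴA). -/
def traceNorm (A : Matrix ι ι ℂ) : ℝ :=
  ((psdSqrt (Matrix.posSemidef_conjTranspose_mul_self A)).trace).re

open Classical in
/-- Matrix square root (junk value 0 on matrices that are not PSD). -/
def matSqrt (A : Matrix ι ι ℂ) : Matrix ι ι ℂ := if h : A.PosSemidef then psdSqrt h else 0

/-- Fidelity F(ρ,σ) = ‖√ρ√σ‖₁². -/
def fidelity (ρ σ : Matrix ι ι ℂ) : ℝ := (traceNorm (matSqrt ρ * matSqrt σ))^2

/-- The dephasing map Δ, keeping only the diagonal. -/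
def deph (ρ : Matrix ι ι ℂ) : Matrix ι ι ℂ := Matrix.diagonal (fun i => ρ i i)

/-- The m-distillation norm ‖ψ‖_{[m]} = min_x (‖ψ-x‖₁ + √m ‖x‖₂). -/
def distNorm (m : ℕ) (ψ : ι → ℂ) : ℝ :=
  ⨅ x : ι → ℂ, ((∑ i, ‖ψ i - x i‖) +
    Real.sqrt m * Real.sqrt (∑ i, ‖x i‖^2))

/-- M_m: convex combinations of pure states with ℓ∞ norm at most 1/√m. -/
def Mset (m : ℕ) : Set (Matrix ι ι ℂ) :=
  {ω | ∃ (n : ℕ) (p : Fin n → ℝ) (ψ : Fin n → ι → ℂ),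
    (∀ i, 0 ≤ p i) ∧ (∑ i, p i = 1) ∧
    (∀ i, ∑ j, ‖ψ i j‖^2 = 1) ∧
    (∀ i j, ‖ψ i j‖ ≤ 1 / Real.sqrt m) ∧
    ω = ∑ i, p i • pureState (ψ i)}

/-- N_m: density matrices with all diagonal entries at most 1/m. -/
def Nset (m : ℕ) : Set (Matrix ι ι ℂ) :=
  {ω | IsDensityMatrix ω ∧ ∀ i, (ω i i).re ≤ 1 / m}

/-- Optimal fidelity of assisted distillation F_A(ρ,m) = max_{ω ∈ M_m} F(ρ,ω). -/
def FA (ρ : Matrix ι ι ℂ) (m : ℕ) : ℝ :=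
  sSup {r : ℝ | ∃ ω ∈ Mset (ι := ι) m, r = fidelity ρ ω}

end

/-!
Dephasing can only increase the fidelity. By the polar decomposition
`‖√ρ √ω‖₁ = Re Tr (U (√ρ √ω)ᴴ)` for a contraction `U`, and Cauchy–Schwarz applied column by column
bounds this by `∑ᵢ ‖(√ρ)ᵢ‖ ‖(√ω)ᵢ‖ = ∑ᵢ √ρᵢᵢ √ωᵢᵢ`. For `ω ∈ N_m` the vector `w = √m (√ωᵢᵢ)ᵢ`
has `‖w‖_∞ ≤ 1` and `‖w‖₂ = √m`, so weak duality for the infimum defining the distillation norm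
gives `√m ∑ᵢ √ρᵢᵢ √ωᵢᵢ = ⟨δ(ρ), w⟩ ≤ ‖δ(ρ)‖_[m]`.
-/

open WithLp

section TraceNorm

variable {ι : Type*} [Fintype ι]

lemma norm_toLp_sq (x : ι → ℂ) : ‖toLp 2 x‖ ^ 2 = (star x ⬝ᵥ x).re := by
  rw [@norm_sq_eq_re_inner ℂ, EuclideanSpace.inner_toLp_toLp, dotProduct_comm]
  rfl

lemma sqrt_re_conjTranspose_mul_self_apply (B : Matrix ι ι ℂ) (i : ι) :
    √((Bᴴ * B) i i).re = ‖toLp 2 (Bᵀ i)‖ := by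
  rw [← Real.sqrt_sq (norm_nonneg _), norm_toLp_sq]
  rfl

variable [DecidableEq ι]

lemma norm_toLp_mulVec_le {U : Matrix ι ι ℂ} (hU : (1 - Uᴴ * U).PosSemidef) (x : ι → ℂ) :
    ‖toLp 2 (U *ᵥ x)‖ ≤ ‖toLp 2 x‖ := by
  have h := hU.dotProduct_mulVec_nonneg x
  rw [sub_mulVec, one_mulVec, dotProduct_sub, ← mulVec_mulVec, dotProduct_mulVec, ← star_mulVec,
    sub_nonneg] at h
  rw [← sq_le_sq₀ (norm_nonneg _) (norm_nonneg _), norm_toLp_sq, norm_toLp_sq]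
  exact (Complex.le_def.mp h).1

lemma re_star_dotProduct_mulVec_le {U : Matrix ι ι ℂ} (hU : (1 - Uᴴ * U).PosSemidef)
    (b c : ι → ℂ) : (star b ⬝ᵥ (U *ᵥ c)).re ≤ ‖toLp 2 b‖ * ‖toLp 2 c‖ :=
  calc (star b ⬝ᵥ (U *ᵥ c)).re
      = RCLike.re (inner ℂ (toLp 2 b) (toLp 2 (U *ᵥ c))) := by
        rw [EuclideanSpace.inner_toLp_toLp, dotProduct_comm]; rfl
    _ ≤ ‖toLp 2 b‖ * ‖toLp 2 (U *ᵥ c)‖ := re_inner_le_norm _ _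
    _ ≤ ‖toLp 2 b‖ * ‖toLp 2 c‖ := by gcongr; exact norm_toLp_mulVec_le hU c

lemma psdSqrt_posSemidef {A : Matrix ι ι ℂ} (hA : A.PosSemidef) : (psdSqrt hA).PosSemidef := by
  rw [psdSqrt, star_eq_conjTranspose]
  refine PosSemidef.mul_mul_conjTranspose_same (PosSemidef.diagonal fun i => ?_) _
  simp [Real.sqrt_nonneg]

lemma psdSqrt_mul_self {A : Matrix ι ι ℂ} (hA : A.PosSemidef) : psdSqrt hA * psdSqrt hA = A := by
  have hU : star (hA.1.eigenvectorUnitary : Matrix ι ι ℂ) *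
      (hA.1.eigenvectorUnitary : Matrix ι ι ℂ) = 1 :=
    Unitary.star_mul_self_of_mem hA.1.eigenvectorUnitary.2
  have h := hA.1.spectral_theorem
  rw [Unitary.conjStarAlgAut_apply] at h
  unfold psdSqrt
  conv_rhs => rw [h]
  simp only [mul_assoc]
  rw [← mul_assoc (star _), hU, one_mul, ← mul_assoc (diagonal _), diagonal_mul_diagonal]
  congr 3; funext i
  simp [← Complex.ofReal_mul, Real.mul_self_sqrt (hA.eigenvalues_nonneg i)]

lemma mul_diagonal_mul_conjTranspose_mul {V : Matrix ι ι ℂ} (hV : Vᴴ * V = 1) (f g : ι → ℂ) :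
    V * diagonal f * Vᴴ * (V * diagonal g * Vᴴ) = V * diagonal (f * g) * Vᴴ := by
  simp only [mul_assoc]
  rw [← mul_assoc Vᴴ V, hV, one_mul, ← mul_assoc (diagonal f), diagonal_mul_diagonal]
  rfl

lemma inv_sqrt_mul_mul_inv_sqrt_le_one (t : ℝ) : (√t)⁻¹ * t * (√t)⁻¹ ≤ 1 := by
  rcases le_or_gt t 0 with ht | ht
  · simp [Real.sqrt_eq_zero'.mpr ht]
  · rw [mul_inv_le_iff₀ (by positivity), one_mul, inv_mul_le_iff₀ (by positivity),
      Real.mul_self_sqrt ht.le]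

theorem exists_contraction_traceNorm_eq_re_trace (A : Matrix ι ι ℂ) :
    ∃ U : Matrix ι ι ℂ, (1 - Uᴴ * U).PosSemidef ∧ traceNorm A = (U * Aᴴ).trace.re := by
  have hH := posSemidef_conjTranspose_mul_self A
  set V : Matrix ι ι ℂ := (hH.1.eigenvectorUnitary : Matrix ι ι ℂ)
  set μ := hH.1.eigenvalues
  have hV : Vᴴ * V = 1 := Unitary.star_mul_self_of_mem hH.1.eigenvectorUnitary.2
  have hV' : V * Vᴴ = 1 := Unitary.mul_star_self_of_mem hH.1.eigenvectorUnitary.2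
  have hspec : Aᴴ * A = V * diagonal (fun i => (μ i : ℂ)) * Vᴴ := hH.1.spectral_theorem
  -- `E` is the pseudo-inverse of `√(Aᴴ A)`: the junk value `0⁻¹ = 0` handles its kernel.
  set E := V * diagonal (fun i => (((√(μ i))⁻¹ : ℝ) : ℂ)) * Vᴴ with hE_def
  refine ⟨A * E, ?_, ?_⟩
  · have hEA : (A * E)ᴴ * (A * E) =
        V * diagonal (fun i => (((√(μ i))⁻¹ * μ i * (√(μ i))⁻¹ : ℝ) : ℂ)) * Vᴴ := by
      have hE : Eᴴ = E := by simp [E, conjTranspose_mul, mul_assoc, Pi.star_def]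
      rw [conjTranspose_mul, hE, mul_assoc, ← mul_assoc Aᴴ, ← mul_assoc, hspec, hE_def,
        mul_diagonal_mul_conjTranspose_mul hV, mul_diagonal_mul_conjTranspose_mul hV]
      refine congrArg (fun f => V * diagonal f * Vᴴ) (funext fun i => ?_)
      simp only [Pi.mul_apply]
      push_cast
      ring
    have hOne : (1 : Matrix ι ι ℂ) = V * diagonal (fun _ => 1) * Vᴴ := by
      rw [diagonal_one, mul_one, hV']
    rw [hEA, hOne, ← sub_mul, ← mul_sub, diagonal_sub]
    refine PosSemidef.mul_mul_conjTranspose_same (PosSemidef.diagonal fun i => ?_) _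
    rw [Pi.zero_apply, ← Complex.ofReal_one, ← Complex.ofReal_sub, Complex.zero_le_real,
      sub_nonneg]
    exact inv_sqrt_mul_mul_inv_sqrt_le_one _
  · have hsqrt : psdSqrt hH = E * (Aᴴ * A) := by
      rw [show psdSqrt hH = V * diagonal (fun i => ((√(μ i) : ℝ) : ℂ)) * Vᴴ from rfl, hspec,
        hE_def, mul_diagonal_mul_conjTranspose_mul hV]
      refine congrArg (fun f => V * diagonal f * Vᴴ) (funext fun i => ?_)
      simp only [Pi.mul_apply]
      rw [← Complex.ofReal_mul, inv_mul_eq_div, Real.div_sqrt]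
    rw [traceNorm, hsqrt, ← mul_assoc, trace_mul_comm, ← mul_assoc]

lemma matSqrt_eq_psdSqrt {A : Matrix ι ι ℂ} (hA : A.PosSemidef) : matSqrt A = psdSqrt hA :=
  dif_pos hA

lemma traceNorm_nonneg (A : Matrix ι ι ℂ) : 0 ≤ traceNorm A :=
  (Complex.nonneg_iff.mp (psdSqrt_posSemidef _).trace_nonneg).1

theorem traceNorm_mul_le (B C : Matrix ι ι ℂ) :
    traceNorm (B * C) ≤ ∑ i, √((Bᴴ * B) i i).re * √((C * Cᴴ) i i).re := by
  obtain ⟨U, hU, hA⟩ := exists_contraction_traceNorm_eq_re_trace (B * C)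
  calc traceNorm (B * C) = ∑ i, (star (Bᵀ i) ⬝ᵥ (U *ᵥ Cᴴᵀ i)).re := by
        rw [hA, conjTranspose_mul, ← mul_assoc, trace_mul_comm, trace, Complex.re_sum]
        rfl
    _ ≤ ∑ i, ‖toLp 2 (Bᵀ i)‖ * ‖toLp 2 (Cᴴᵀ i)‖ :=
        Finset.sum_le_sum fun i _ => re_star_dotProduct_mulVec_le hU _ _
    _ = ∑ i, √((Bᴴ * B) i i).re * √((C * Cᴴ) i i).re := by
        refine Finset.sum_congr rfl fun i _ => ?_
        rw [sqrt_re_conjTranspose_mul_self_apply, ← sqrt_re_conjTranspose_mul_self_apply Cᴴ,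
          conjTranspose_conjTranspose]

theorem fidelity_le_sq_sum_sqrt_diag_mul {ρ ω : Matrix ι ι ℂ} (hρ : ρ.PosSemidef)
    (hω : ω.PosSemidef) : fidelity ρ ω ≤ (∑ i, √(ρ i i).re * √(ω i i).re) ^ 2 := by
  have h := traceNorm_mul_le (psdSqrt hρ) (psdSqrt hω)
  rw [(psdSqrt_posSemidef hρ).1.eq, (psdSqrt_posSemidef hω).1.eq, psdSqrt_mul_self,
    psdSqrt_mul_self] at h
  rw [fidelity, matSqrt_eq_psdSqrt hρ, matSqrt_eq_psdSqrt hω]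
  exact pow_le_pow_left₀ (traceNorm_nonneg _) h 2

end TraceNorm

section DistillationNorm

variable {ι : Type*} [Fintype ι]

theorem sum_norm_mul_le_distNorm (m : ℕ) (ψ : ι → ℂ) {w : ι → ℝ} (hw : ∀ i, |w i| ≤ 1)
    (hw₂ : ∑ i, w i ^ 2 ≤ m) : ∑ i, ‖ψ i‖ * w i ≤ distNorm m ψ := by
  refine le_ciInf fun x => ?_
  have hCS : ∑ i, ‖x i‖ * |w i| ≤ √m * √(∑ i, ‖x i‖ ^ 2) := by
    refine (Real.sum_mul_le_sqrt_mul_sqrt _ _ _).trans ?_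
    rw [mul_comm]
    gcongr
    simpa only [sq_abs] using hw₂
  calc ∑ i, ‖ψ i‖ * w i ≤ ∑ i, (‖ψ i - x i‖ + ‖x i‖ * |w i|) := by
        refine Finset.sum_le_sum fun i _ => ?_
        calc ‖ψ i‖ * w i ≤ ‖ψ i‖ * |w i| := by gcongr; exact le_abs_self _
          _ ≤ (‖ψ i - x i‖ + ‖x i‖) * |w i| := by gcongr; exact norm_le_norm_sub_add _ _
          _ ≤ ‖ψ i - x i‖ + ‖x i‖ * |w i| := by
              rw [add_mul]
              gcongr
              exact mul_le_of_le_one_right (norm_nonneg _) (hw i)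
    _ ≤ ∑ i, ‖ψ i - x i‖ + √m * √(∑ i, ‖x i‖ ^ 2) := by
        rw [Finset.sum_add_distrib]
        gcongr

theorem sqrt_mul_sum_norm_mul_sqrt_diag_le_distNorm {m : ℕ} (hm : 0 < m) {ω : Matrix ι ι ℂ}
    (hω : ω ∈ Nset m) (ψ : ι → ℂ) : √m * ∑ i, ‖ψ i‖ * √(ω i i).re ≤ distNorm m ψ := by
  obtain ⟨⟨hωpsd, hωtr⟩, hωdiag⟩ := hω
  have hm' : (0 : ℝ) < m := Nat.cast_pos.mpr hm
  have hdiag : ∀ i, 0 ≤ (ω i i).re := fun i => (Complex.nonneg_iff.mp hωpsd.diag_nonneg).1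
  rw [Finset.mul_sum]
  convert sum_norm_mul_le_distNorm m ψ (w := fun i => √m * √(ω i i).re) (fun i => ?_) ?_ using 2
  · ring
  · rw [abs_of_nonneg (by positivity), ← Real.sqrt_mul hm'.le, Real.sqrt_le_one,
      ← le_div_iff₀' hm']
    exact hωdiag i
  · simp_rw [mul_pow, Real.sq_sqrt hm'.le, Real.sq_sqrt (hdiag _), ← Finset.mul_sum]
    have htr : ∑ i, (ω i i).re = 1 := by
      rw [← Complex.re_sum]
      exact congrArg Complex.re hωtr
    rw [htr, mul_one]

end DistillationNorm

theorem stmt11 {d : ℕ} (ρ : Matrix (Fin d) (Fin d) ℂ) (hρ : IsDensityMatrix ρ)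
    (m : ℕ) (hm : 1 ≤ m) :
    ∀ ω ∈ Nset (ι := Fin d) m, fidelity ρ ω ≤
      (1 / m) * (distNorm m (fun i => (Real.sqrt (ρ i i).re : ℂ)))^2 := by
  intro ω hω
  set S := ∑ i, √(ρ i i).re * √(ω i i).re
  have hm' : (0 : ℝ) < m := Nat.cast_pos.mpr hm
  have hS : 0 ≤ S := Finset.sum_nonneg fun i _ => by positivity
  have hdist : √m * S ≤ distNorm m (fun i => (√(ρ i i).re : ℂ)) := by
    simpa only [Complex.norm_of_nonneg (Real.sqrt_nonneg _)] using
      sqrt_mul_sum_norm_mul_sqrt_diag_le_distNorm hm hω (fun i => (√(ρ i i).re : ℂ))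
  calc fidelity ρ ω ≤ S ^ 2 := fidelity_le_sq_sum_sqrt_diag_mul hρ.1 hω.1.1
    _ = 1 / m * (√m * S) ^ 2 := by
        rw [mul_pow, Real.sq_sqrt hm'.le]
        field_simp
    _ ≤ 1 / m * distNorm m (fun i => (√(ρ i i).re : ℂ)) ^ 2 := by gcongr
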